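/- arXiv:2303.08723 — 2 statements merged into one kernel-verified Lean document; each statement's English description precedes it below -/
import Mathlib

section
/- (Nesting of exact living sets for a point-additive cost, equation (7) of the paper.) For every natural numbers s ≤ t, one has Z*_{t+1,s} ⊆ Z*_{t,s}; in particular, if Z*_{t,s} = ∅ then Z*_{t+1,s} = ∅. -/
/-- The classical FPOP functional cost of candidate change `s` at time `t`, with a
constant penalty `α`: `f̃_{t,s}(μ) = F(s) + Σ_{i=s+1}^{t} (y i − μ)² + α`. -/
noncomputable def ftilde (y F : ℕ → ℝ) (α : ℝ) (t s : ℕ) (μ : ℝ) : ℝ :=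
  F s + ∑ i ∈ Finset.Icc (s + 1) t, (y i - μ) ^ 2 + α

/-- `F̃_t(μ) = min_{0 ≤ s ≤ t} f̃_{t,s}(μ)`. -/
noncomputable def Ftilde (y F : ℕ → ℝ) (α : ℝ) (t : ℕ) (μ : ℝ) : ℝ :=
  (Finset.range (t + 1)).inf' ⟨0, Finset.mem_range.2 (Nat.succ_pos t)⟩
    (fun s => ftilde y F α t s μ)

/-- `Z*_{t,s}`: the exact living set of change `s` at time `t`. -/
noncomputable def Zstar (y F : ℕ → ℝ) (α : ℝ) (t s : ℕ) : Set ℝ :=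
  {μ : ℝ | ftilde y F α t s μ = Ftilde y F α t μ}

/-! Passing from time `t` to `t + 1` adds the same point cost `(y (t + 1) - μ) ^ 2` to every
`f̃_{t,s'}` with `s' ≤ t`. Hence if `f̃_{t+1,s}(μ)` is minimal among all candidates `s' ≤ t + 1`,
then `f̃_{t,s}(μ)` is minimal among the candidates `s' ≤ t`. -/

section

variable {y F : ℕ → ℝ} {α : ℝ} {s t : ℕ}

lemma ftilde_succ (hst : s ≤ t) (μ : ℝ) :
    ftilde y F α (t + 1) s μ = ftilde y F α t s μ + (y (t + 1) - μ) ^ 2 := by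
  rw [ftilde, ftilde, Finset.sum_Icc_succ_top (by omega)]
  ring

lemma mem_Zstar_iff (hst : s ≤ t) {μ : ℝ} :
    μ ∈ Zstar y F α t s ↔ ∀ s' ≤ t, ftilde y F α t s μ ≤ ftilde y F α t s' μ := by
  have hs : s ∈ Finset.range (t + 1) := Finset.mem_range.2 (Nat.lt_succ_of_le hst)
  show ftilde y F α t s μ = Ftilde y F α t μ ↔ _
  refine ⟨fun h s' hs' => ?_, fun h => le_antisymm ?_ (Finset.inf'_le _ hs)⟩
  · rw [h]
    exact Finset.inf'_le _ (Finset.mem_range.2 (Nat.lt_succ_of_le hs'))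
  · exact Finset.le_inf' _ _ fun s' hs' => h s' (Nat.lt_succ_iff.1 (Finset.mem_range.1 hs'))

theorem Zstar_succ_subset (hst : s ≤ t) : Zstar y F α (t + 1) s ⊆ Zstar y F α t s := by
  intro μ hμ
  refine (mem_Zstar_iff hst).2 fun s' hs' => ?_
  have hmin := (mem_Zstar_iff (hst.trans t.le_succ)).1 hμ s' (hs'.trans t.le_succ)
  rw [ftilde_succ hst, ftilde_succ hs'] at hmin
  linarith

end

/-- equation (7) of the paper: for a point-additive cost the exact
living sets are nested, `Z*_{t+1,s} ⊆ Z*_{t,s}`; in particular if `Z*_{t,s} = ∅`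
then `Z*_{t+1,s} = ∅`. -/
theorem Zstar_nested (y F : ℕ → ℝ) (α : ℝ) :
    ∀ s t : ℕ, s ≤ t →
      Zstar y F α (t + 1) s ⊆ Zstar y F α t s ∧
      (Zstar y F α t s = ∅ → Zstar y F α (t + 1) s = ∅) := by
  intro s t hst
  exact ⟨Zstar_succ_subset hst, Set.subset_eq_empty (Zstar_succ_subset hst)⟩
end

section
/- (Lemma A.1(b): the PELT condition for concave penalties.) Let y : ℕ → ℝ, let g : ℝ → ℝ be concave on [1, ∞), let β ≥ 0, and set K = 2β·g(1) − β·g(2). Then for all natural numbers s < s' < t, one has C_{s+1:s'} + C_{s'+1:t} + K ≤ C_{s+1:t}. -/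
/-- `ȳ_{a+1:b}`: the empirical mean of `y` over the indices `a+1, …, b`. -/
noncomputable def ybar (y : ℕ → ℝ) (a b : ℕ) : ℝ :=
  (1 / ((b : ℝ) - (a : ℝ))) * ∑ i ∈ Finset.Icc (a + 1) b, y i

/-- `SS_{a+1:b}`: the within-segment sum of squares of `y` over `a+1, …, b`. -/
noncomputable def SS (y : ℕ → ℝ) (a b : ℕ) : ℝ :=
  ∑ i ∈ Finset.Icc (a + 1) b, (y i - ybar y a b) ^ 2

/-- `C_{a+1:b} = SS_{a+1:b} − β·g(b − a)`: the multiscale segment cost, where the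
segment length `b − a` is viewed as a real number. -/
noncomputable def segCost (y : ℕ → ℝ) (g : ℝ → ℝ) (β : ℝ) (a b : ℕ) : ℝ :=
  SS y a b - β * g ((b : ℝ) - (a : ℝ))

lemma concave_exchange {g : ℝ → ℝ} (hg : ConcaveOn ℝ (Set.Ici 1) g)
    {x z y : ℝ} (hx : 1 ≤ x) (hxz : x ≤ z) (hzy : z ≤ y) :
    g x + g y ≤ g z + g (x + y - z) := by
  rcases eq_or_lt_of_le (hxz.trans hzy) with h | h
  · have hz : z = x := le_antisymm (h ▸ hzy) hxz
    rw [hz]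
    have hw : x + y - x = y := by ring
    rw [hw]
  · set t : ℝ := (y - z) / (y - x) with ht
    have hyx : 0 < y - x := by linarith
    have ht0 : 0 ≤ t := div_nonneg (by linarith) hyx.le
    have ht1 : t ≤ 1 := by
      rw [div_le_one hyx]; linarith
    have hxm : x ∈ Set.Ici (1:ℝ) := hx
    have hym : y ∈ Set.Ici (1:ℝ) := le_trans hx (hxz.trans hzy)
    have hsum : t + (1 - t) = 1 := by ring
    have hz' : t • x + (1 - t) • y = z := by
      field_simp [ht, smul_eq_mul]
      rw [ht]; linear_combination (-1:ℝ) * div_mul_cancel₀ (y - z) hyx.ne'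
    have hw' : (1 - t) • x + t • y = x + y - z := by
      have : (1 - t) • x + t • y = x + y - (t • x + (1 - t) • y) := by
        simp [smul_eq_mul]; ring
      rw [this, hz']
    have h1 := hg.2 hxm hym ht0 (by linarith) hsum
    have h2 := hg.2 hxm hym (by linarith : (0:ℝ) ≤ 1 - t) ht0 (by ring)
    rw [hz'] at h1
    rw [hw'] at h2
    simp only [smul_eq_mul] at h1 h2
    linarith

lemma mean_min (y : ℕ → ℝ) (a b : ℕ) (h : a < b) (c : ℝ) :
    SS y a b ≤ ∑ i ∈ Finset.Icc (a + 1) b, (y i - c) ^ 2 := by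
  set S := Finset.Icc (a + 1) b with hS
  set m := ybar y a b with hm
  have hcard : (S.card : ℝ) = (b : ℝ) - a := by
    rw [hS, Nat.card_Icc]
    have : b + 1 - (a + 1) = b - a := by omega
    rw [this, Nat.cast_sub h.le]
  have hne : (b : ℝ) - a ≠ 0 := by
    have : (a : ℝ) < b := by exact_mod_cast h
    linarith
  have hsum : ∑ i ∈ S, y i = ((b : ℝ) - a) * m := by
    rw [hm, ybar]; field_simp; rfl
  have key : ∑ i ∈ S, (y i - c) ^ 2
      = SS y a b + ((b : ℝ) - a) * (m - c) ^ 2 := by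
    have expand : ∑ i ∈ S, (y i - c) ^ 2
        = ∑ i ∈ S, ((y i - m) ^ 2 + (2 * (m - c) * y i + (c ^ 2 - m ^ 2))) :=
      Finset.sum_congr rfl (fun i _ => by ring)
    rw [expand, Finset.sum_add_distrib, Finset.sum_add_distrib,
      ← Finset.mul_sum, Finset.sum_const, nsmul_eq_mul, hsum, hcard]
    have : SS y a b = ∑ i ∈ S, (y i - m) ^ 2 := rfl
    rw [← this]; ring
  rw [key]
  have : 0 ≤ ((b : ℝ) - a) * (m - c) ^ 2 := by
    apply mul_nonneg _ (sq_nonneg _)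
    have : (a : ℝ) < b := by exact_mod_cast h
    linarith
  linarith

/-- Lemma A.1(b): if `g : ℝ → ℝ` is concave on `[1, ∞)`, `β ≥ 0` and
`K = 2β·g(1) − β·g(2)`, the PELT condition `C_{s+1:s'} + C_{s'+1:t} + K ≤ C_{s+1:t}`
holds for all naturals `s < s' < t`. -/
theorem pelt_condition_concave (y : ℕ → ℝ) (g : ℝ → ℝ)
    (hg : ConcaveOn ℝ (Set.Ici 1) g) (β : ℝ) (hβ : 0 ≤ β) :
    ∀ s s' t : ℕ, s < s' → s' < t →
      segCost y g β s s' + segCost y g β s' t + (2 * β * g 1 - β * g 2)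
      ≤ segCost y g β s t := by
  intro s s' t h1 h2
  -- sum of squares part
  have hIcc : ∀ a b : ℕ, Finset.Icc (a + 1) b = Finset.Ioc a b := by
    intro a b; ext i; simp only [Finset.mem_Icc, Finset.mem_Ioc]; omega
  have hsplit : SS y s t
      = ∑ i ∈ Finset.Icc (s + 1) s', (y i - ybar y s t) ^ 2
      + ∑ i ∈ Finset.Icc (s' + 1) t, (y i - ybar y s t) ^ 2 := by
    rw [SS, hIcc, hIcc, hIcc, Finset.sum_Ioc_consecutive _ h1.le h2.le]
  have hSS : SS y s s' + SS y s' t ≤ SS y s t := by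
    rw [hsplit]
    exact add_le_add (mean_min y s s' h1 _) (mean_min y s' t h2 _)
  -- penalty part
  set n1 : ℝ := (s' : ℝ) - s with hn1
  set n2 : ℝ := (t : ℝ) - s' with hn2
  have hn1_1 : 1 ≤ n1 := by
    have : (s : ℝ) + 1 ≤ s' := by exact_mod_cast h1
    simp [hn1]; linarith
  have hn2_1 : 1 ≤ n2 := by
    have : (s' : ℝ) + 1 ≤ t := by exact_mod_cast h2
    simp [hn2]; linarith
  have hA : g 1 + g (n1 + n2) ≤ g n1 + g (n2 + 1) := by
    have := concave_exchange hg (le_refl (1:ℝ)) hn1_1 (by linarith : n1 ≤ n1 + n2)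
    have he : 1 + (n1 + n2) - n1 = n2 + 1 := by ring
    rw [he] at this; exact this
  have hB : g 1 + g (n2 + 1) ≤ g 2 + g n2 := by
    have := concave_exchange hg (le_refl (1:ℝ)) (by linarith : (1:ℝ) ≤ 2)
      (by linarith : (2:ℝ) ≤ n2 + 1)
    have he : 1 + (n2 + 1) - 2 = n2 := by ring
    rw [he] at this; exact this
  have hpen : g (n1 + n2) + 2 * g 1 - g 2 ≤ g n1 + g n2 := by linarith
  have hpenβ : β * (g (n1 + n2) + 2 * g 1 - g 2) ≤ β * (g n1 + g n2) :=
    mul_le_mul_of_nonneg_left hpen hβ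
  have hts : (t : ℝ) - s = n1 + n2 := by rw [hn1, hn2]; ring
  simp only [segCost, hts]
  rw [show ((s' : ℝ) - s) = n1 from rfl, show ((t : ℝ) - s') = n2 from rfl]
  linarith [hSS, hpenβ]
end
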